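/- arXiv:1609.00745 — 6 statements merged into one kernel-verified Lean document; each statement's English description precedes it below -/
import Mathlib

section
/- Let m > 0 and H₀ ≥ 0 be real constants, and let Φ : ℝ → ℝ be twice continuously differentiable. Suppose Φ satisfies the Klein–Gordon equation Φ''(t) + 3H₀·Φ'(t) + m²·Φ(t) = 0 for all t, and the Einstein constraint 3H₀² = 8π(Φ'(t)² + m²Φ(t)²) for all t. Then H₀ = 0 and Φ(t) = 0 for all t. -/
/-!
The Einstein constraint with constant `H₀` says that the Klein–Gordon energy
`Φ'² + m²Φ²` is the constant `3H₀²/(8π)`. Along solutions of the damped Klein–Gordon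
equation the energy decays at rate `6H₀Φ'²`, so `H₀Φ'² ≡ 0`. If `H₀ ≠ 0` the field is
frozen, `Φ' ≡ 0`, the equation forces `Φ ≡ 0`, and the constraint then gives `H₀ = 0`,
a contradiction. With `H₀ = 0` the energy vanishes, hence so does `Φ`.
-/

open Real

namespace SlowRolling

noncomputable def energy (m : ℝ) (Φ : ℝ → ℝ) (t : ℝ) : ℝ :=
  deriv Φ t ^ 2 + m ^ 2 * Φ t ^ 2

variable {m : ℝ} {Φ : ℝ → ℝ}

theorem hasDerivAt_energy (hΦ : Differentiable ℝ Φ) (hΦ' : Differentiable ℝ (deriv Φ))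
    (t : ℝ) :
    HasDerivAt (energy m Φ) (2 * deriv Φ t * (deriv (deriv Φ) t + m ^ 2 * Φ t)) t := by
  have h : HasDerivAt (fun s => deriv Φ s ^ 2 + m ^ 2 * Φ s ^ 2)
      (2 * deriv Φ t ^ 1 * deriv (deriv Φ) t + m ^ 2 * (2 * Φ t ^ 1 * deriv Φ t)) t :=
    ((hΦ' t).hasDerivAt.pow 2).add (((hΦ t).hasDerivAt.pow 2).const_mul (m ^ 2))
  exact h.congr_deriv (by ring)

theorem damping_mul_sq_deriv_eq_zero {H₀ E : ℝ}
    (hΦ : Differentiable ℝ Φ) (hΦ' : Differentiable ℝ (deriv Φ))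
    (hKG : ∀ t, deriv (deriv Φ) t + 3 * H₀ * deriv Φ t + m ^ 2 * Φ t = 0)
    (hE : ∀ t, energy m Φ t = E) (t : ℝ) :
    H₀ * deriv Φ t ^ 2 = 0 := by
  have hconst : energy m Φ = fun _ => E := funext hE
  have hzero : 2 * deriv Φ t * (deriv (deriv Φ) t + m ^ 2 * Φ t) = 0 := by
    have h := hasDerivAt_energy (m := m) hΦ hΦ' t
    rw [hconst] at h
    exact h.unique (hasDerivAt_const t E)
  linear_combination deriv Φ t * hKG t / 3 - hzero / 6

theorem eq_zero_of_deriv_eq_zero {H₀ : ℝ} (hm : m ≠ 0)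
    (hKG : ∀ t, deriv (deriv Φ) t + 3 * H₀ * deriv Φ t + m ^ 2 * Φ t = 0)
    (hΦ' : ∀ t, deriv Φ t = 0) (t : ℝ) :
    Φ t = 0 := by
  have hΦ'' : deriv (deriv Φ) t = 0 := by
    rw [funext hΦ', deriv_const]
  have h := hKG t
  rw [hΦ'', hΦ' t] at h
  simpa [hm] using h

theorem eq_zero_of_energy_eq_zero (hm : m ≠ 0) {t : ℝ} (h : energy m Φ t = 0) :
    Φ t = 0 := by
  have hpot : m ^ 2 * Φ t ^ 2 = 0 := by
    unfold energy at h
    nlinarith [sq_nonneg (deriv Φ t), sq_nonneg m, sq_nonneg (Φ t)]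
  simpa [hm] using hpot

end SlowRolling

open SlowRolling

theorem slow_rolling_trivial_solution_general
    (m H₀ : ℝ) (hm : m > 0)
    (Φ : ℝ → ℝ) (hΦ : ContDiff ℝ 2 Φ)
    (hKG : ∀ t : ℝ, deriv (deriv Φ) t + 3 * H₀ * deriv Φ t + m ^ 2 * Φ t = 0)
    (hEinstein : ∀ t : ℝ,
      3 * H₀ ^ 2 = 8 * Real.pi * ((deriv Φ t) ^ 2 + m ^ 2 * (Φ t) ^ 2)) :
    H₀ = 0 ∧ ∀ t : ℝ, Φ t = 0 := by
  have hm0 : m ≠ 0 := hm.ne'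
  have hE : ∀ t, energy m Φ t = 3 * H₀ ^ 2 / (8 * π) := fun t => by
    rw [energy, hEinstein t]
    field_simp
  have hH₀ : H₀ = 0 := by
    by_contra hne
    have hΦ' : ∀ t, deriv Φ t = 0 := fun t => by
      simpa [hne] using
        damping_mul_sq_deriv_eq_zero (hΦ.differentiable two_ne_zero) hΦ.differentiable_deriv_two
          hKG hE t
    have h := hEinstein 0
    rw [hΦ' 0, eq_zero_of_deriv_eq_zero hm0 hKG hΦ' 0] at h
    exact hne (by simpa using h)
  refine ⟨hH₀, fun t => eq_zero_of_energy_eq_zero hm0 ?_⟩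
  simp [hE t, hH₀]

/-- Strict slow rolling (constant Hubble parameter `H₀`) together with the
Klein–Gordon and Einstein equations yields only the trivial solution. -/
theorem slow_rolling_trivial_solution
    (m H₀ : ℝ) (hm : m > 0) (hH : H₀ ≥ 0)
    (Φ : ℝ → ℝ) (hΦ : ContDiff ℝ 2 Φ)
    (hKG : ∀ t : ℝ, deriv (deriv Φ) t + 3 * H₀ * deriv Φ t + m ^ 2 * Φ t = 0)
    (hEinstein : ∀ t : ℝ,
      3 * H₀ ^ 2 = 8 * Real.pi * ((deriv Φ t) ^ 2 + m ^ 2 * (Φ t) ^ 2)) :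
    H₀ = 0 ∧ ∀ t : ℝ, Φ t = 0 :=
  slow_rolling_trivial_solution_general m H₀ hm Φ hΦ hKG hEinstein
end

section
/- Let C₁ > 0 and C₂ ∈ ℝ, and define on t > 0 the functions a(t) = C₁^{1/3}·(24π)^{1/6}·t^{1/3} and Φ(t) = C₂ + (1/√(24π))·ln t. Then for all t > 0: (i) 3·(a'(t)/a(t))² = 8π·Φ'(t)², and (ii) a(t)³·Φ'(t) = C₁. -/
open Real

/-! With `a = K t^{1/3}` and `Φ = C₂ + b ln t`, both `a'/a = 1/(3t)` and `Φ' = b/t` are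
multiples of `1/t`; the Einstein equation then reduces to `1/3 = 8π b²`, i.e. `b = 1/√(24π)`,
and `a³ = C₁ √(24π) t` makes `a³Φ'` the constant `C₁`. -/

lemma deriv_const_mul_rpow_div_self {K p t : ℝ} (hK : K ≠ 0) (ht : 0 < t) :
    deriv (fun s : ℝ => K * s ^ p) t / (K * t ^ p) = p / t := by
  rw [((hasDerivAt_rpow_const (Or.inl ht.ne')).const_mul K).deriv, rpow_sub_one ht.ne']
  have htp : t ^ p ≠ 0 := (rpow_pos_of_pos ht p).ne'
  field_simp

lemma deriv_const_add_const_mul_log (c b : ℝ) {t : ℝ} (ht : t ≠ 0) :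
    deriv (fun s : ℝ => c + b * log s) t = b / t := by
  rw [((hasDerivAt_log ht).const_mul b).const_add c |>.deriv, div_eq_mul_inv]

lemma rpow_one_div_natCast_pow {x : ℝ} (hx : 0 ≤ x) {n : ℕ} (hn : n ≠ 0) :
    (x ^ (1 / (n : ℝ))) ^ n = x := by
  rw [one_div, rpow_inv_natCast_pow hx hn]

lemma rpow_one_div_six_pow_three {x : ℝ} (hx : 0 ≤ x) : (x ^ (1 / (6 : ℝ))) ^ 3 = √x := by
  rw [← rpow_natCast, ← rpow_mul hx, sqrt_eq_rpow]
  norm_num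

/-- The correct slow-rolling solution: `a(t) = C₁^{1/3}(24π)^{1/6} t^{1/3}`,
`Φ(t) = C₂ + ln t/√(24π)` satisfies the slow-rolling Einstein equation and has
first integral `a³Φ' = C₁` for `t > 0`. -/
theorem stiff_solution_slow_rolling
    (C₁ C₂ : ℝ) (hC₁ : C₁ > 0)
    (a Φ : ℝ → ℝ)
    (ha : ∀ t : ℝ, a t = C₁ ^ ((1 : ℝ) / 3) * (24 * Real.pi) ^ ((1 : ℝ) / 6) * t ^ ((1 : ℝ) / 3))
    (hΦ : ∀ t : ℝ, Φ t = C₂ + (1 / Real.sqrt (24 * Real.pi)) * Real.log t) :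
    ∀ t : ℝ, t > 0 →
      (3 * (deriv a t / a t) ^ 2 = 8 * Real.pi * (deriv Φ t) ^ 2 ∧
       (a t) ^ 3 * deriv Φ t = C₁) := by
  intro t ht
  have hπ : (0 : ℝ) < 24 * π := by positivity
  have hK : C₁ ^ ((1 : ℝ) / 3) * (24 * π) ^ ((1 : ℝ) / 6) ≠ 0 := by positivity
  have hlogderiv_a : deriv a t / a t = 1 / 3 / t := by
    rw [funext ha]
    exact deriv_const_mul_rpow_div_self hK ht
  have hderiv_Φ : deriv Φ t = 1 / √(24 * π) / t := by
    rw [funext hΦ]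
    exact deriv_const_add_const_mul_log _ _ ht.ne'
  have hcube : a t ^ 3 = C₁ * √(24 * π) * t := by
    have hC₁_cube : (C₁ ^ ((1 : ℝ) / 3)) ^ 3 = C₁ := by
      exact_mod_cast rpow_one_div_natCast_pow hC₁.le three_ne_zero
    have ht_cube : (t ^ ((1 : ℝ) / 3)) ^ 3 = t := by
      exact_mod_cast rpow_one_div_natCast_pow ht.le three_ne_zero
    rw [ha t, mul_pow, mul_pow, hC₁_cube, ht_cube, rpow_one_div_six_pow_three hπ.le]
  refine ⟨?_, ?_⟩
  · rw [hlogderiv_a, hderiv_Φ]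
    simp only [div_pow, sq_sqrt hπ.le]
    field_simp
    ring
  · rw [hcube, hderiv_Φ]
    field_simp
end

section
/- Let H₀ > 0 and m ≠ 0, and let φ : ℝ → ℝ be twice continuously differentiable satisfying φ''(t) + 3H₀·φ'(t) + m² = 0 for all t. Then φ is unbounded on (−∞, 0]; that is, for every M > 0 there exists t ≤ 0 with |φ(t)| > M. -/
/-!
Write the equation as `φ'' + c φ' + a = 0` with `c, a > 0` and put `k = a / c`. Then
`ψ = φ' + k` solves `ψ' = -c ψ`, so `ψ t = ψ 0 * exp (-c t)`.
If `ψ 0 ≤ 0` then `φ' ≤ -k < 0` everywhere and `φ → +∞` as `t → -∞`; if `ψ 0 > 0` then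
`φ' → +∞` as `t → -∞`, so `φ' ≥ 1` far in the past and `φ → -∞`.
-/

open Real Filter Set

lemma tendsto_atBot_atBot_of_eventually_le_deriv {f : ℝ → ℝ} (hf : Differentiable ℝ f)
    {ε : ℝ} (hε : 0 < ε) (hd : ∀ᶠ t in atBot, ε ≤ deriv f t) : Tendsto f atBot atBot := by
  obtain ⟨T, hT⟩ := eventually_atBot.mp hd
  have hslope : ∀ t ≤ T, f t ≤ f T - ε * T + ε * t := fun t ht => by
    have := (convex_Iic T).mul_sub_le_image_sub_of_le_deriv hf.continuous.continuousOn
      hf.differentiableOn (fun x hx => hT x (interior_subset (s := Iic T) hx)) t ht T self_mem_Iic ht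
    linarith
  refine tendsto_atBot_mono' atBot (eventually_atBot.mpr ⟨T, hslope⟩) ?_
  exact tendsto_atBot_add_const_left _ _ (tendsto_id.const_mul_atBot hε)

lemma tendsto_atBot_atTop_of_eventually_deriv_le_neg {f : ℝ → ℝ} (hf : Differentiable ℝ f)
    {ε : ℝ} (hε : 0 < ε) (hd : ∀ᶠ t in atBot, deriv f t ≤ -ε) : Tendsto f atBot atTop := by
  have hneg := tendsto_atBot_atBot_of_eventually_le_deriv hf.neg hε
    (hd.mono fun t ht => by rw [deriv.neg']; linarith)
  simpa [Function.comp_def] using tendsto_neg_atBot_atTop.comp hneg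

lemma eq_mul_exp_of_hasDerivAt_mul {g : ℝ → ℝ} {c : ℝ} (hg : ∀ t, HasDerivAt g (c * g t) t)
    (t : ℝ) : g t = g 0 * exp (c * t) := by
  have hconst : ∀ s, HasDerivAt (fun s => exp (-(c * s)) * g s) 0 s := fun s => by
    have hexp : HasDerivAt (fun s => exp (-(c * s))) (exp (-(c * s)) * -c) s := by
      simpa using ((hasDerivAt_id s).const_mul c).neg.exp
    exact (hexp.mul (hg s)).congr_deriv (by ring)
  have := is_const_of_deriv_eq_zero (fun s => (hconst s).differentiableAt)
    (fun s => (hconst s).deriv) t 0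
  simp only [mul_zero, neg_zero, exp_zero, one_mul] at this
  rw [← this, mul_right_comm, ← exp_add]
  simp

lemma deriv_add_div_eq_mul_exp_of_ode {φ : ℝ → ℝ} {c a : ℝ}
    (hc : c ≠ 0) (hφ : Differentiable ℝ (deriv φ))
    (heq : ∀ t, deriv (deriv φ) t + c * deriv φ t + a = 0) (t : ℝ) :
    deriv φ t + a / c = (deriv φ 0 + a / c) * exp (-c * t) :=
  eq_mul_exp_of_hasDerivAt_mul (g := fun t => deriv φ t + a / c) (fun s => by
    refine ((hφ s).hasDerivAt.add_const (a / c)).congr_deriv ?_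
    field_simp
    linear_combination heq s) t

lemma tendsto_abs_atBot_atTop_of_ode {φ : ℝ → ℝ} {c a : ℝ} (hc : 0 < c) (ha : 0 < a)
    (hφ : ContDiff ℝ 2 φ) (heq : ∀ t, deriv (deriv φ) t + c * deriv φ t + a = 0) :
    Tendsto (fun t => |φ t|) atBot atTop := by
  have hk : 0 < a / c := div_pos ha hc
  set C := deriv φ 0 + a / c
  have hsol t := deriv_add_div_eq_mul_exp_of_ode hc.ne' hφ.differentiable_deriv_two heq t
  have hdiff : Differentiable ℝ φ := hφ.differentiable two_ne_zero
  rcases le_or_gt C 0 with hC | hC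
  · refine tendsto_abs_atTop_atTop.comp
      (tendsto_atBot_atTop_of_eventually_deriv_le_neg hdiff hk (Eventually.of_forall fun t => ?_))
    nlinarith [hsol t, exp_pos (-c * t)]
  · have hgrow : Tendsto (fun t => C * exp (-c * t) - a / c) atBot atTop :=
      tendsto_atTop_add_const_right _ _ ((tendsto_exp_atTop.comp
        (tendsto_id.const_mul_atBot_of_neg (neg_neg_of_pos hc))).const_mul_atTop hC)
    refine tendsto_abs_atBot_atTop.comp
      (tendsto_atBot_atBot_of_eventually_le_deriv hdiff one_pos ?_)
    filter_upwards [hgrow.eventually_ge_atTop 1] with t ht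
    linarith [hsol t]

/-- Every solution of the linearized perturbation equation `φ'' + 3H₀φ' + m² = 0`
is unbounded in the infinite past. -/
theorem perturbation_unbounded_in_past
    (H₀ m : ℝ) (hH : H₀ > 0) (hm : m ≠ 0)
    (φ : ℝ → ℝ) (hφ : ContDiff ℝ 2 φ)
    (heq : ∀ t : ℝ, deriv (deriv φ) t + 3 * H₀ * deriv φ t + m ^ 2 = 0) :
    ∀ M : ℝ, M > 0 → ∃ t : ℝ, t ≤ 0 ∧ |φ t| > M := by
  intro M _
  have habs := tendsto_abs_atBot_atTop_of_ode (by positivity) (by positivity) hφ heq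
  exact ((habs.eventually_gt_atTop M).and (eventually_le_atBot 0)).exists.imp
    fun _ ht => ⟨ht.2, ht.1⟩
end

section
/- Let Φ : ℝ → ℝ be twice continuously differentiable and satisfy Φ''(τ) + √(24π)·√(Φ'(τ)² + Φ(τ)²)·Φ'(τ) + Φ(τ) = 0 for all τ. Then Φ(τ) → 0 and Φ'(τ) → 0 as τ → +∞; consequently the normalized Hubble constant h(τ) = √(8π/3)·√(Φ'(τ)² + Φ(τ)²) tends to 0 as τ → +∞. -/
/-!
Writing `x = Φ`, `y = Φ'`, the equation is the damped oscillator `y' = -γ y - x` with the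
state-dependent damping `γ = √(24π) · √(x² + y²)`. The energy `E = x² + y²` satisfies
`E' = -2γ y² ≤ 0`, so it decreases to a limit `L`. If `L > 0`, the damping stays between two
positive constants, and then the Lyapunov function `E + ε x y` decays exponentially for small
`ε`, forcing `E → 0`, a contradiction. Hence `E → 0`, which is the claim.
-/

open Real Filter Set Topology

theorem le_mul_exp_neg_of_deriv_le_neg_mul {f f' : ℝ → ℝ} {κ : ℝ}
    (hf : ∀ t, HasDerivAt f (f' t) t) (hf' : ∀ t, 0 ≤ t → f' t ≤ -κ * f t) {t : ℝ} (ht : 0 ≤ t) :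
    f t ≤ f 0 * exp (-κ * t) := by
  have hg : ∀ s, HasDerivAt (fun s => f s * exp (κ * s))
      ((f' s + κ * f s) * exp (κ * s)) s := fun s =>
    ((hf s).fun_mul ((hasDerivAt_id' s).const_mul κ).exp).congr_deriv (by ring)
  have hanti : AntitoneOn (fun s => f s * exp (κ * s)) (Ici 0) := by
    refine antitoneOn_of_hasDerivWithinAt_nonpos (convex_Ici 0)
      (fun s _ => (hg s).continuousAt.continuousWithinAt) (fun s _ => (hg s).hasDerivWithinAt)
      fun s hs => ?_
    rw [interior_Ici] at hs
    exact mul_nonpos_of_nonpos_of_nonneg (by linarith [hf' s (le_of_lt hs)]) (exp_pos _).le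
  rw [neg_mul, exp_neg, ← div_eq_mul_inv, le_div_iff₀ (exp_pos _)]
  simpa using hanti self_mem_Ici ht ht

/- Along `x' = y`, `y' = -g y - x`, the left side is the derivative of the Lyapunov function
`y² + x² + ε x y`, which is compared here with that function itself. -/
theorem damped_oscillator_lyapunov_deriv_le {ε a b g x y : ℝ} (hε : 0 ≤ ε) (hε1 : ε ≤ 1)
    (hεa : ε * (1 + b ^ 2 / 2) ≤ a) (ha : a ≤ g) (hb : g ≤ b) :
    -(2 * g - ε) * y ^ 2 - ε * g * x * y - ε * x ^ 2
      ≤ -(ε / 3) * (y ^ 2 + x ^ 2 + ε * x * y) := by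
  have hg : 0 ≤ g := by nlinarith
  have hg2 : ε * g ^ 2 * y ^ 2 ≤ ε * b ^ 2 * y ^ 2 := by gcongr
  have hcross : ε * x * y ≤ (y ^ 2 + x ^ 2) / 2 := by
    nlinarith [mul_nonneg hε (sq_nonneg (x - y)), mul_nonneg (sub_nonneg.2 hε1) (sq_nonneg (x - y))]
  calc -(2 * g - ε) * y ^ 2 - ε * g * x * y - ε * x ^ 2
      ≤ -(ε / 2) * (y ^ 2 + x ^ 2) := by
        nlinarith [mul_nonneg hε (sq_nonneg (x + g * y)),
          mul_nonneg (sub_nonneg.2 hεa) (sq_nonneg y), mul_nonneg (sub_nonneg.2 ha) (sq_nonneg y),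
          mul_nonneg hε (sq_nonneg y), mul_nonneg hε (sq_nonneg (b * y))]
    _ ≤ -(ε / 3) * (y ^ 2 + x ^ 2 + ε * x * y) := by
      nlinarith [mul_le_mul_of_nonneg_left hcross hε]

section DampedOscillator

variable {x y γ : ℝ → ℝ}

theorem hasDerivAt_oscillator_energy {t : ℝ} (hx : HasDerivAt x (y t) t)
    (hy : HasDerivAt y (-(γ t * y t) - x t) t) :
    HasDerivAt (fun t => y t ^ 2 + x t ^ 2) (-(2 * γ t * y t ^ 2)) t :=
  ((hy.pow 2).add (hx.pow 2)).congr_deriv (by ring)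

theorem antitone_oscillator_energy (hx : ∀ t, HasDerivAt x (y t) t)
    (hy : ∀ t, HasDerivAt y (-(γ t * y t) - x t) t) (hγ : ∀ t, 0 ≤ γ t) :
    Antitone fun t => y t ^ 2 + x t ^ 2 :=
  antitone_of_hasDerivAt_nonpos (fun t => hasDerivAt_oscillator_energy (hx t) (hy t))
    fun t => neg_nonpos.mpr (by have := hγ t; positivity)

theorem tendsto_oscillator_energy_zero {a b : ℝ} (hx : ∀ t, HasDerivAt x (y t) t)
    (hy : ∀ t, HasDerivAt y (-(γ t * y t) - x t) t) (ha : 0 < a)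
    (hγ : ∀ t, 0 ≤ t → a ≤ γ t ∧ γ t ≤ b) :
    Tendsto (fun t => y t ^ 2 + x t ^ 2) atTop (𝓝 0) := by
  set ε := min 1 (a / (1 + b ^ 2 / 2))
  have hε : 0 < ε := lt_min one_pos (by positivity)
  have hε1 : ε ≤ 1 := min_le_left _ _
  have hεa : ε * (1 + b ^ 2 / 2) ≤ a := (le_div_iff₀ (by positivity)).mp (min_le_right _ _)
  set V := fun t => y t ^ 2 + x t ^ 2 + ε * x t * y t
  have hV : ∀ t, HasDerivAt V (-(2 * γ t - ε) * y t ^ 2 - ε * γ t * x t * y t - ε * x t ^ 2) t :=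
    fun t => ((hasDerivAt_oscillator_energy (hx t) (hy t)).add
      (((hx t).const_mul ε).mul (hy t))).congr_deriv (by ring)
  have hdecay : ∀ t, 0 ≤ t → V t ≤ V 0 * exp (-(ε / 3) * t) :=
    fun t => le_mul_exp_neg_of_deriv_le_neg_mul hV fun s hs =>
      damped_oscillator_lyapunov_deriv_le hε.le hε1 hεa (hγ s hs).1 (hγ s hs).2
  have hV_tendsto : Tendsto (fun t => 2 * (V 0 * exp (-(ε / 3) * t))) atTop (𝓝 0) := by
    simpa using ((tendsto_exp_atBot.comp
      (tendsto_id.const_mul_atTop_of_neg (by linarith : -(ε / 3) < 0))).const_mul (V 0)).const_mul 2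
  refine squeeze_zero' (Eventually.of_forall fun t => by positivity) ?_ hV_tendsto
  filter_upwards [eventually_ge_atTop 0] with t ht
  have hV_ge : (y t ^ 2 + x t ^ 2) / 2 ≤ V t := by
    nlinarith [mul_nonneg hε.le (sq_nonneg (x t + y t)), sq_nonneg (x t + y t)]
  linarith [hdecay t ht]

theorem tendsto_energy_zero_of_radial_damping {c : ℝ} (hc : 0 < c)
    (hx : ∀ t, HasDerivAt x (y t) t)
    (hy : ∀ t, HasDerivAt y (-(c * √(y t ^ 2 + x t ^ 2) * y t) - x t) t) :
    Tendsto (fun t => y t ^ 2 + x t ^ 2) atTop (𝓝 0) := by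
  set E := fun t => y t ^ 2 + x t ^ 2
  have hanti : Antitone E := antitone_oscillator_energy hx hy fun t => by positivity
  have hbdd : BddBelow (range E) := ⟨0, by rintro _ ⟨t, rfl⟩; positivity⟩
  have hlim : Tendsto E atTop (𝓝 (⨅ t, E t)) := tendsto_atTop_ciInf hanti hbdd
  suffices hL : ⨅ t, E t = 0 by rwa [hL] at hlim
  by_contra hL
  have hL_pos : 0 < ⨅ t, E t := (le_ciInf fun t => by positivity).lt_of_ne' hL
  refine hL (tendsto_nhds_unique hlim (tendsto_oscillator_energy_zero hx hy
    (a := c * √(⨅ t, E t)) (b := c * √(E 0)) (by positivity) fun t ht => ⟨?_, ?_⟩))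
  · gcongr
    exact ciInf_le hbdd t
  · gcongr
    exact hanti ht

end DampedOscillator

/-- Every solution of the rescaled Einstein–Klein–Gordon system winds toward the
center `(0,0)`: `Φ → 0`, `Φ' → 0`, hence the Hubble constant `h → 0` as `τ → +∞`. -/
theorem solution_tends_to_center
    (Φ : ℝ → ℝ) (hΦ : ContDiff ℝ 2 Φ)
    (heq : ∀ τ : ℝ, deriv (deriv Φ) τ
      + Real.sqrt (24 * Real.pi) * Real.sqrt ((deriv Φ τ) ^ 2 + (Φ τ) ^ 2) * deriv Φ τ
      + Φ τ = 0) :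
    Tendsto Φ atTop (nhds 0) ∧
    Tendsto (deriv Φ) atTop (nhds 0) ∧
    Tendsto (fun τ => Real.sqrt (8 * Real.pi / 3)
      * Real.sqrt ((deriv Φ τ) ^ 2 + (Φ τ) ^ 2)) atTop (nhds 0) := by
  have hΦ' : ∀ τ, HasDerivAt Φ (deriv Φ τ) τ :=
    fun τ => (hΦ.differentiable (by norm_num) τ).hasDerivAt
  have hΦ'' : ∀ τ, HasDerivAt (deriv Φ)
      (-(√(24 * π) * √(deriv Φ τ ^ 2 + Φ τ ^ 2) * deriv Φ τ) - Φ τ) τ := fun τ =>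
    (hΦ.differentiable_deriv_two τ).hasDerivAt.congr_deriv (by linarith [heq τ])
  have hr : Tendsto (fun τ => √(deriv Φ τ ^ 2 + Φ τ ^ 2)) atTop (𝓝 0) := by
    simpa using (tendsto_energy_zero_of_radial_damping (by positivity) hΦ' hΦ'').sqrt
  refine ⟨squeeze_zero_norm (fun τ => ?_) hr, squeeze_zero_norm (fun τ => ?_) hr,
    by simpa using hr.const_mul √(8 * π / 3)⟩
  · exact abs_le_sqrt (le_add_of_nonneg_left (sq_nonneg _))
  · exact abs_le_sqrt (le_add_of_nonneg_right (sq_nonneg _))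
end

section
/- Let Φ : ℝ → ℝ be twice continuously differentiable with (Φ(τ), Φ'(τ)) ≠ (0,0) for all τ, satisfying Φ''(τ) + √(24π)·√(Φ'(τ)² + Φ(τ)²)·Φ'(τ) + Φ(τ) = 0 for all τ. Then the function h(τ) = √(8π/3)·√(Φ'(τ)² + Φ(τ)²) is differentiable with h'(τ) = −8π·Φ'(τ)² for all τ; in particular h is monotonically nonincreasing. -/
open Real

/-!
Write `E = Φ'² + Φ²`. Along a damped oscillator `Φ'' + γΦ' + Φ = 0` one has `E' = -2γΦ'²`.
Here the friction is the Hubble friction `γ = √(24π)·√E`, so `E' = -2√(24π)·Φ'²·√E`; since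
`E > 0` this gives `(√E)' = -√(24π)·Φ'²`, and `√(8π/3)·√(24π) = 8π` yields `h' = -8πΦ'²`.
-/

lemma sq_add_sq_pos_of_ne_zero {R : Type*} [Ring R] [LinearOrder R] [IsStrictOrderedRing R]
    {x y : R} (h : (x, y) ≠ (0, 0)) : 0 < y ^ 2 + x ^ 2 := by
  rcases ne_or_eq x 0 with hx | rfl
  · have := sq_pos_of_ne_zero hx
    positivity
  · have hy : y ≠ 0 := fun hy => h (by rw [hy])
    positivity

lemma hasDerivAt_energy_of_damped_oscillator {φ u : ℝ → ℝ} {a γ τ : ℝ}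
    (hφ : HasDerivAt φ (u τ) τ) (hu : HasDerivAt u a τ) (hosc : a + γ * u τ + φ τ = 0) :
    HasDerivAt (fun t => u t ^ 2 + φ t ^ 2) (-2 * γ * u τ ^ 2) τ := by
  refine ((hu.pow 2).add (hφ.pow 2)).congr_deriv ?_
  linear_combination (2 * u τ) * hosc

lemma hasDerivAt_sqrt_of_hasDerivAt_mul_sqrt {E : ℝ → ℝ} {c τ : ℝ}
    (hE : HasDerivAt E (c * √(E τ)) τ) (hpos : 0 < E τ) :
    HasDerivAt (fun t => √(E t)) (c / 2) τ := by
  refine (hE.sqrt hpos.ne').congr_deriv ?_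
  field_simp [(sqrt_pos.mpr hpos).ne']

lemma sqrt_div_three_mul_sqrt_three_mul {c : ℝ} (hc : 0 ≤ c) : √(c / 3) * √(3 * c) = c := by
  rw [← sqrt_mul (by positivity), show c / 3 * (3 * c) = c ^ 2 by ring, sqrt_sq hc]

/-- Along nontrivial solutions of the rescaled Einstein–Klein–Gordon system the
normalized Hubble constant `h = √(8π/3)·√(Φ'² + Φ²)` satisfies `h' = −8πΦ'²`,
hence is nonincreasing. -/
theorem hubble_nonincreasing
    (Φ : ℝ → ℝ) (hΦ : ContDiff ℝ 2 Φ)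
    (hne : ∀ τ : ℝ, (Φ τ, deriv Φ τ) ≠ ((0 : ℝ), (0 : ℝ)))
    (heq : ∀ τ : ℝ, deriv (deriv Φ) τ
      + Real.sqrt (24 * Real.pi) * Real.sqrt ((deriv Φ τ) ^ 2 + (Φ τ) ^ 2) * deriv Φ τ
      + Φ τ = 0) :
    (∀ τ : ℝ,
      HasDerivAt (fun τ' => Real.sqrt (8 * Real.pi / 3)
        * Real.sqrt ((deriv Φ τ') ^ 2 + (Φ τ') ^ 2))
        (-8 * Real.pi * (deriv Φ τ) ^ 2) τ) ∧
    Antitone (fun τ => Real.sqrt (8 * Real.pi / 3)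
      * Real.sqrt ((deriv Φ τ) ^ 2 + (Φ τ) ^ 2)) := by
  have hΦd : Differentiable ℝ Φ := hΦ.differentiable (by norm_num)
  have hΦ'd : Differentiable ℝ (deriv Φ) := hΦ.differentiable_deriv_two
  have hderiv : ∀ τ : ℝ, HasDerivAt (fun τ' => √(8 * π / 3) * √(deriv Φ τ' ^ 2 + Φ τ' ^ 2))
      (-8 * π * deriv Φ τ ^ 2) τ := by
    intro τ
    have hE := hasDerivAt_energy_of_damped_oscillator (hΦd τ).hasDerivAt (hΦ'd τ).hasDerivAt
      (heq τ)
    have hsqrtE := hasDerivAt_sqrt_of_hasDerivAt_mul_sqrt (c := -2 * √(24 * π) * deriv Φ τ ^ 2)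
      (hE.congr_deriv (by ring)) (sq_add_sq_pos_of_ne_zero (hne τ))
    refine (hsqrtE.const_mul √(8 * π / 3)).congr_deriv ?_
    have hconst := sqrt_div_three_mul_sqrt_three_mul (c := 8 * π) (by positivity)
    rw [show (3 : ℝ) * (8 * π) = 24 * π by ring] at hconst
    linear_combination (-deriv Φ τ ^ 2) * hconst
  exact ⟨hderiv, antitone_of_hasDerivAt_nonpos hderiv fun τ =>
    mul_nonpos_of_nonpos_of_nonneg (by linarith [pi_pos]) (sq_nonneg _)⟩
end

section
/- For each x > 0 there exists a unique y ∈ ℝ such that √(24π)·√(x² + y²)·y + x = 0; this y satisfies y < 0, and as x → +∞ the corresponding y = y(x) converges to Z₀ = −1/√(24π). -/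
open Real Filter

/-- For each `x > 0` the nullcline equation `√(24π)·√(x²+y²)·y + x = 0` has a
unique solution `y = Y(x)`, which is negative, and `Y(x) → Z₀ = −1/√(24π)` as
`x → +∞`. -/
theorem nullcline_unique_and_limit :
    ∃ Y : ℝ → ℝ,
      (∀ x : ℝ, x > 0 →
        (Real.sqrt (24 * Real.pi) * Real.sqrt (x ^ 2 + (Y x) ^ 2) * Y x + x = 0 ∧
         Y x < 0 ∧
         ∀ y : ℝ, Real.sqrt (24 * Real.pi) * Real.sqrt (x ^ 2 + y ^ 2) * y + x = 0 →
           y = Y x)) ∧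
      Tendsto Y atTop (nhds (-1 / Real.sqrt (24 * Real.pi))) := by
  have hpi : (0:ℝ) < 24 * Real.pi := by positivity
  set c := Real.sqrt (24 * Real.pi) with hc
  have hc0 : 0 < c := Real.sqrt_pos.mpr hpi
  have hcne : c ≠ 0 := hc0.ne'
  have hc2 : c ^ 2 = 24 * Real.pi := Real.sq_sqrt hpi.le
  refine ⟨fun x => -Real.sqrt (2 / (c ^ 2 + Real.sqrt (c ^ 4 + 4 * c ^ 2 / x ^ 2))),
    ?_, ?_⟩
  · intro x hx
    have hx0 : x ≠ 0 := ne_of_gt hx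
    set E := Real.sqrt (c ^ 4 + 4 * c ^ 2 / x ^ 2) with hE
    have hEarg : (0:ℝ) < c ^ 4 + 4 * c ^ 2 / x ^ 2 := by positivity
    have hE0 : 0 < E := Real.sqrt_pos.mpr hEarg
    have hE2 : E ^ 2 = c ^ 4 + 4 * c ^ 2 / x ^ 2 := Real.sq_sqrt hEarg.le
    have hE2' : x ^ 2 * E ^ 2 = c ^ 4 * x ^ 2 + 4 * c ^ 2 := by
      rw [hE2]; field_simp
    set u := 2 / (c ^ 2 + E) with hu
    have hden : 0 < c ^ 2 + E := by positivity
    have hu0 : 0 < u := by positivity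
    -- key algebraic identity
    have hku : c ^ 2 * ((x ^ 2 + u) * u) = x ^ 2 := by
      rw [hu]
      field_simp
      ring_nf
      nlinarith [hE2', sq_nonneg x, sq_nonneg E]
    have hkey : (x ^ 2 + u) * u = (x / c) ^ 2 := by
      rw [div_pow, eq_div_iff (by positivity)]
      linarith [hku]
    have hsu : Real.sqrt u ^ 2 = u := Real.sq_sqrt hu0.le
    have hsqrtprod : Real.sqrt (x ^ 2 + u) * Real.sqrt u = x / c := by
      rw [← Real.sqrt_mul (by positivity) u, hkey]
      exact Real.sqrt_sq (by positivity)
    have hneg : (-Real.sqrt u) ^ 2 = u := by rw [neg_pow]; simp [hsu]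
    refine ⟨?_, ?_, ?_⟩
    · show c * Real.sqrt (x ^ 2 + (-Real.sqrt u) ^ 2) * (-Real.sqrt u) + x = 0
      rw [hneg]
      have h : c * Real.sqrt (x ^ 2 + u) * Real.sqrt u = x := by
        rw [mul_assoc, hsqrtprod]
        field_simp
      linarith [h]
    · show -Real.sqrt u < 0
      simpa using Real.sqrt_pos.mpr hu0
    · intro y hy
      show y = -Real.sqrt u
      have hyneg : y < 0 := by
        by_contra h
        push_neg at h
        have h1 : 0 ≤ c * Real.sqrt (x ^ 2 + y ^ 2) * y := by positivity
        linarith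
      have hs : Real.sqrt (x ^ 2 + y ^ 2) ^ 2 = x ^ 2 + y ^ 2 :=
        Real.sq_sqrt (by positivity)
      have h2 : c * Real.sqrt (x ^ 2 + y ^ 2) * y = -x := by linarith
      have h3 : (c * Real.sqrt (x ^ 2 + y ^ 2) * y) ^ 2 = x ^ 2 := by
        rw [h2]; ring
      have hsq : c ^ 2 * (x ^ 2 + y ^ 2) * y ^ 2 = x ^ 2 := by
        linear_combination h3 - c ^ 2 * y ^ 2 * hs
      have h5 : (y ^ 2 - u) * (c ^ 2 * (x ^ 2 + y ^ 2 + u)) = 0 := by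
        linear_combination hsq - hku
      have h6 : c ^ 2 * (x ^ 2 + y ^ 2 + u) ≠ 0 := by positivity
      have hy2 : y ^ 2 = u := by
        have := (mul_eq_zero.mp h5).resolve_right h6
        linarith
      have h7 : Real.sqrt u = -y := by
        rw [← hy2, Real.sqrt_sq_eq_abs, abs_of_neg hyneg]
      linarith [h7]
  · -- limit
    have h1 : Tendsto (fun x : ℝ => 4 * c ^ 2 / x ^ 2) atTop (nhds 0) := by
      have h2 : Tendsto (fun x : ℝ => x ^ 2) atTop atTop :=
        Filter.tendsto_pow_atTop (by norm_num : (2:ℕ) ≠ 0)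
      have h := h2.inv_tendsto_atTop
      have h' := h.const_mul (4 * c ^ 2)
      simpa [div_eq_mul_inv] using h'
    have hcont1 : ContinuousAt (fun t : ℝ => Real.sqrt (c ^ 4 + t)) 0 :=
      ((continuous_const.add continuous_id).sqrt).continuousAt
    have hd : c ^ 2 + Real.sqrt (c ^ 4 + (0:ℝ)) ≠ 0 := by positivity
    have hF : ContinuousAt
        (fun t : ℝ => -Real.sqrt (2 / (c ^ 2 + Real.sqrt (c ^ 4 + t)))) 0 :=
      ((continuousAt_const.div (continuousAt_const.add hcont1) hd).sqrt).neg
    have hcomp := hF.tendsto.comp h1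
    have hval : -Real.sqrt (2 / (c ^ 2 + Real.sqrt (c ^ 4 + (0:ℝ)))) = -1 / c := by
      have h4 : Real.sqrt (c ^ 4 + (0:ℝ)) = c ^ 2 := by
        rw [add_zero, show c ^ 4 = (c ^ 2) ^ 2 by ring]
        exact Real.sqrt_sq (by positivity)
      rw [h4]
      have h8 : (2 : ℝ) / (c ^ 2 + c ^ 2) = (1 / c) ^ 2 := by
        field_simp
        ring
      rw [h8, Real.sqrt_sq (by positivity)]
      ring
    rw [hval] at hcomp
    exact hcomp
end
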